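/- arXiv:1203.5657 — 3 statements merged into one kernel-verified Lean document; each statement's English description precedes it below -/
import Mathlib

section
/- Let C be a triangulated category with a bounded co-t-structure (C_{≥0}, C_{≤0}) with co-heart A = C_{≥0} ∩ C_{≤0}. Then A is a silting subcategory of C: A is closed under direct summands, Hom(M, Σ^m N) = 0 for all m > 0 and all M, N ∈ A, and C = thick(A). -/
/-!
Both halves of a co-t-structure are orthogonality classes: `X ∈ C_{≥0}` iff
`Hom(X, ΣC_{≤0}) = 0`, and `Y ∈ C_{≤0}` iff `Hom(C_{≥0}, ΣY) = 0` (the approximation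
triangle of `X`, resp. `ΣY`, then splits). Hence both are extension closed.
For `X ∈ C_{≥0}` with `Σ^{k+1} X ∈ C_{≤0}`, the approximation triangle `G → ΣX → Y → ΣG`
gives a triangle `Σ⁻¹G → X → Σ⁻¹Y → G` with `Σ⁻¹Y` in the co-heart, `G ∈ C_{≥0}` and
`Σ^k G ∈ C_{≤0}`, so induction on `k` puts `X` in `thick(A)`; boundedness brings every object
into this situation up to shift.
-/

open CategoryTheory Limits Pretriangulated Triangulated

universe v u

variable (C : Type u) [Category.{v} C] [Preadditive C] [HasZeroObject C] [HasShift C ℤ]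
  [∀ (n : ℤ), (shiftFunctor C n).Additive] [Pretriangulated C]

def IsExtensionClosed (S : Set C) : Prop :=
  ∀ T : Triangle C, (T ∈ distTriang C) → T.obj₁ ∈ S → T.obj₃ ∈ S → T.obj₂ ∈ S

def IsThick (S : Set C) : Prop :=
  (∀ A B : C, (A ≅ B) → A ∈ S → B ∈ S) ∧
  (∀ Z : C, IsZero Z → Z ∈ S) ∧
  (∀ X ∈ S, ∀ n : ℤ, (shiftFunctor C n).obj X ∈ S) ∧
  IsExtensionClosed C S ∧
  (∀ X Y : C, (∃ (i : X ⟶ Y) (p : Y ⟶ X), i ≫ p = 𝟙 X) → Y ∈ S → X ∈ S)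

def thickClosure (X : Set C) : Set C := ⋂₀ {S : Set C | X ⊆ S ∧ IsThick C S}

/-- A co-t-structure (weight structure) on a triangulated category `C`:
a pair `(ge, le) = (C_{≥0}, C_{≤0})` of strict full additive subcategories closed under
direct summands with `Σ⁻¹C_{≥0} ⊆ C_{≥0}`, `ΣC_{≤0} ⊆ C_{≤0}`, `Hom(C_{≥0}, ΣC_{≤0}) = 0`
and approximation triangles. -/
structure CoTStructure where
  ge : Set C
  le : Set C
  ge_iso : ∀ A B : C, (A ≅ B) → A ∈ ge → B ∈ ge
  le_iso : ∀ A B : C, (A ≅ B) → A ∈ le → B ∈ le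
  ge_zero : ∀ Z : C, IsZero Z → Z ∈ ge
  le_zero : ∀ Z : C, IsZero Z → Z ∈ le
  ge_add : ∀ X Y : C, X ∈ ge → Y ∈ ge → (X ⊞ Y) ∈ ge
  le_add : ∀ X Y : C, X ∈ le → Y ∈ le → (X ⊞ Y) ∈ le
  ge_summand : ∀ X Y : C, (∃ (i : X ⟶ Y) (p : Y ⟶ X), i ≫ p = 𝟙 X) → Y ∈ ge → X ∈ ge
  le_summand : ∀ X Y : C, (∃ (i : X ⟶ Y) (p : Y ⟶ X), i ≫ p = 𝟙 X) → Y ∈ le → X ∈ le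
  ge_shift : ∀ X : C, X ∈ ge → (shiftFunctor C (-1 : ℤ)).obj X ∈ ge
  le_shift : ∀ X : C, X ∈ le → (shiftFunctor C (1 : ℤ)).obj X ∈ le
  hom_zero : ∀ X Y : C, X ∈ ge → Y ∈ le → ∀ f : X ⟶ (shiftFunctor C (1 : ℤ)).obj Y, f = 0
  exists_triangle : ∀ M : C, ∃ (X Y : C) (_ : X ∈ ge)
    (_ : (shiftFunctor C (-1 : ℤ)).obj Y ∈ le) (f : X ⟶ M) (g : M ⟶ Y)
    (h : Y ⟶ (shiftFunctor C (1 : ℤ)).obj X), Triangle.mk f g h ∈ distTriang C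

def CoTStructure.IsBounded (w : CoTStructure C) : Prop :=
  ∀ X : C, (∃ n : ℤ, (shiftFunctor C n).obj X ∈ w.le) ∧
    (∃ n : ℤ, (shiftFunctor C n).obj X ∈ w.ge)

/-- The co-heart of a co-t-structure. -/
def CoTStructure.coheart (w : CoTStructure C) : Set C := w.ge ∩ w.le

variable {C}

lemma CategoryTheory.Pretriangulated.nonempty_retract_obj₁_of_mor₂_eq_zero (T : Triangle C)
    (hT : T ∈ distTriang C) (h : T.mor₂ = 0) : Nonempty (Retract T.obj₂ T.obj₁) := by
  obtain ⟨r, hr⟩ := Triangle.coyoneda_exact₂ T hT (𝟙 _) (by rw [h, comp_zero])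
  exact ⟨⟨r, T.mor₁, hr.symm⟩⟩

lemma CategoryTheory.Pretriangulated.nonempty_retract_obj₃_of_mor₁_eq_zero (T : Triangle C)
    (hT : T ∈ distTriang C) (h : T.mor₁ = 0) : Nonempty (Retract T.obj₂ T.obj₃) := by
  obtain ⟨s, hs⟩ := Triangle.yoneda_exact₂ T hT (𝟙 _) (by rw [h, zero_comp])
  exact ⟨⟨T.mor₂, s, hs.symm⟩⟩

namespace CoTStructure

variable (w : CoTStructure C)

lemma mem_ge_of_retract {X Y : C} (r : Retract X Y) (hY : Y ∈ w.ge) : X ∈ w.ge :=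
  w.ge_summand X Y ⟨r.i, r.r, r.retract⟩ hY

lemma mem_le_of_retract {X Y : C} (r : Retract X Y) (hY : Y ∈ w.le) : X ∈ w.le :=
  w.le_summand X Y ⟨r.i, r.r, r.retract⟩ hY

lemma shift_mem_le {X : C} (hX : X ∈ w.le) {n : ℤ} (hn : 0 ≤ n) :
    (shiftFunctor C n).obj X ∈ w.le := by
  lift n to ℕ using hn
  induction n with
  | zero => exact w.le_iso _ _ ((shiftFunctorZero C ℤ).app X).symm hX
  | succ n ih =>
    exact w.le_iso _ _
      ((shiftFunctorAdd' C (n : ℤ) 1 (n + 1 : ℕ) (by push_cast; rfl)).app X).symm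
      (w.le_shift _ ih)

lemma shift_mem_ge {X : C} (hX : X ∈ w.ge) {n : ℤ} (hn : n ≤ 0) :
    (shiftFunctor C n).obj X ∈ w.ge := by
  obtain ⟨n, rfl⟩ := Int.exists_eq_neg_ofNat hn
  induction n with
  | zero => exact w.ge_iso _ _ ((shiftFunctorZero C ℤ).app X).symm hX
  | succ n ih =>
    exact w.ge_iso _ _
      ((shiftFunctorAdd' C (-(n : ℤ)) (-1) (-(n + 1 : ℕ)) (by push_cast; ring)).app X).symm
      (w.ge_shift _ (ih (by omega)))

lemma hom_eq_zero_of_pos {X Y : C} (hX : X ∈ w.ge) (hY : Y ∈ w.le) {m : ℤ} (hm : 0 < m)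
    (f : X ⟶ (shiftFunctor C m).obj Y) : f = 0 := by
  have e := (shiftFunctorAdd' C (m - 1) 1 m (by ring)).app Y
  exact (Preadditive.IsIso.comp_right_eq_zero f e.hom).1
    (w.hom_zero X _ hX (w.shift_mem_le hY (by omega)) _)

lemma mem_ge_iff {X : C} :
    X ∈ w.ge ↔ ∀ Y ∈ w.le, ∀ f : X ⟶ (shiftFunctor C (1 : ℤ)).obj Y, f = 0 := by
  refine ⟨fun hX Y hY => w.hom_zero X Y hX hY, fun h => ?_⟩
  obtain ⟨X', X'', hX', hX'', f, g, t, hT⟩ := w.exists_triangle X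
  have hg : g = 0 := (Preadditive.IsIso.comp_right_eq_zero g
    ((shiftFunctorCompIsoId C (-1 : ℤ) 1 (by norm_num)).inv.app X'')).1 (h _ hX'' _)
  obtain ⟨r⟩ := nonempty_retract_obj₁_of_mor₂_eq_zero _ hT hg
  exact w.mem_ge_of_retract r hX'

lemma mem_le_iff {Y : C} :
    Y ∈ w.le ↔ ∀ X ∈ w.ge, ∀ f : X ⟶ (shiftFunctor C (1 : ℤ)).obj Y, f = 0 := by
  refine ⟨fun hY X hX => w.hom_zero X Y hX hY, fun h => ?_⟩
  obtain ⟨Y', Y'', hY', hY'', f, g, t, hT⟩ :=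
    w.exists_triangle ((shiftFunctor C (1 : ℤ)).obj Y)
  obtain ⟨r⟩ := nonempty_retract_obj₃_of_mor₁_eq_zero _ hT (h _ hY' f)
  refine w.mem_le_of_retract ?_ hY''
  exact (Retract.ofIso ((shiftFunctorCompIsoId C (1 : ℤ) (-1) (by norm_num)).app Y).symm).trans
    (r.map (shiftFunctor C (-1 : ℤ)))

lemma isExtensionClosed_ge : IsExtensionClosed C w.ge := by
  intro T hT h₁ h₃
  refine w.mem_ge_iff.2 fun Y hY f => ?_
  obtain ⟨g, rfl⟩ := T.yoneda_exact₂ hT f (w.hom_zero _ _ h₁ hY _)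
  rw [w.hom_zero _ _ h₃ hY g, comp_zero]

lemma isExtensionClosed_le : IsExtensionClosed C w.le := by
  intro T hT h₁ h₃
  refine w.mem_le_iff.2 fun X hX f => ?_
  have hT₁ := Triangle.shift_distinguished T hT 1
  obtain ⟨g, rfl⟩ := Triangle.coyoneda_exact₂ _ hT₁ f (w.hom_zero _ _ hX h₃ _)
  rw [w.hom_zero _ _ hX h₁ g]
  exact zero_comp

lemma exists_distTriang_of_mem_ge {X : C} (hX : X ∈ w.ge) :
    ∃ (N G : C) (u : N ⟶ G) (v : G ⟶ (shiftFunctor C (1 : ℤ)).obj X)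
      (t : (shiftFunctor C (1 : ℤ)).obj X ⟶ (shiftFunctor C (1 : ℤ)).obj N),
      N ∈ w.coheart ∧ G ∈ w.ge ∧ Triangle.mk u v t ∈ distTriang C := by
  obtain ⟨G, Y, hG, hY, f, g, h, hT⟩ := w.exists_triangle ((shiftFunctor C (1 : ℤ)).obj X)
  have hT₁ := inv_rot_of_distTriang _ hT
  have hX₁ : (shiftFunctor C (-1 : ℤ)).obj ((shiftFunctor C (1 : ℤ)).obj X) ∈ w.ge :=
    w.ge_iso _ _ ((shiftFunctorCompIsoId C (1 : ℤ) (-1) (by norm_num)).app X).symm hX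
  have hN := w.isExtensionClosed_ge _ (inv_rot_of_distTriang _ hT₁) hX₁ hG
  exact ⟨_, _, _, _, _, ⟨hN, hY⟩, hG, hT₁⟩

lemma mem_of_isThick_of_shift_mem_le {S : Set C} (hS : IsThick C S) (hsub : w.coheart ⊆ S)
    (k : ℕ) :
    ∀ X ∈ w.ge, (shiftFunctor C (k : ℤ)).obj X ∈ w.le → X ∈ S := by
  obtain ⟨hiso, -, hshift, hext, -⟩ := hS
  induction k with
  | zero => exact fun X hX hle => hsub ⟨hX, w.le_iso _ _ ((shiftFunctorZero C ℤ).app X) hle⟩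
  | succ k ih =>
    intro X hX hle
    obtain ⟨N, G, u, v, t, hN, hG, hT⟩ := w.exists_distTriang_of_mem_ge hX
    have hGk : (shiftFunctor C (k : ℤ)).obj G ∈ w.le :=
      w.isExtensionClosed_le _ (Triangle.shift_distinguished _ hT k)
        (w.shift_mem_le hN.2 (Int.natCast_nonneg k))
        (w.le_iso _ _
          ((shiftFunctorAdd' C (1 : ℤ) k (k + 1 : ℕ) (by push_cast; ring)).app X) hle)
    have hX₁ := hext _ (inv_rot_of_distTriang _ (inv_rot_of_distTriang _ hT))
      (hshift G (ih G hG hGk) (-1)) (hsub hN)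
    exact hiso _ _ ((shiftFunctorCompIsoId C (1 : ℤ) (-1) (by norm_num)).app X) hX₁

lemma mem_thickClosure_coheart (hw : w.IsBounded) (X : C) : X ∈ thickClosure C w.coheart := by
  rintro S ⟨hsub, hS⟩
  obtain ⟨⟨n, hn⟩, ⟨m, hm⟩⟩ := hw X
  obtain ⟨k, hk⟩ := Int.eq_ofNat_of_zero_le (show 0 ≤ n - min m n by omega)
  have hge : (shiftFunctor C (min m n)).obj X ∈ w.ge :=
    w.ge_iso _ _ ((shiftFunctorAdd' C m (min m n - m) (min m n) (by ring)).app X).symm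
      (w.shift_mem_ge hm (by omega))
  have hle : (shiftFunctor C (k : ℤ)).obj ((shiftFunctor C (min m n)).obj X) ∈ w.le :=
    w.le_iso _ _ ((shiftFunctorAdd' C (min m n) k n (by omega)).app X) hn
  exact hS.1 _ _ ((shiftFunctorCompIsoId C (min m n) (-min m n) (by ring)).app X)
    (hS.2.2.1 _ (w.mem_of_isThick_of_shift_mem_le hS hsub k _ hge hle) _)

end CoTStructure

theorem statement3 (w : CoTStructure C) (hbounded : w.IsBounded) :
    -- the co-heart is closed under direct summands
    (∀ X Y : C, (∃ (i : X ⟶ Y) (p : Y ⟶ X), i ≫ p = 𝟙 X) → Y ∈ w.coheart →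
      X ∈ w.coheart) ∧
    -- Hom(M, Σ^m N) = 0 for m > 0 and M, N in the co-heart
    (∀ M N : C, M ∈ w.coheart → N ∈ w.coheart → ∀ (m : ℤ), 0 < m →
      ∀ f : M ⟶ (shiftFunctor C m).obj N, f = 0) ∧
    -- the co-heart generates C as a thick subcategory
    (∀ X : C, X ∈ thickClosure C w.coheart) :=
  ⟨fun X Y h hY => ⟨w.ge_summand X Y h hY.1, w.le_summand X Y h hY.2⟩,
    fun _ _ hM hN _ hm f => w.hom_eq_zero_of_pos hM.1 hN.2 hm f,
    w.mem_thickClosure_coheart hbounded⟩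
end

section
/- Let C be a triangulated category, (C^{≤0}, C^{≥0}) a bounded t-structure with heart A, and (T, F) a torsion pair in A. Define C'^{≤0} = {M ∈ C : H^m(M) = 0 for m > 0 and H^0(M) ∈ T} and C'^{≥0} = {M ∈ C : H^m(M) = 0 for m < -1 and H^{-1}(M) ∈ F}, where H^m denotes cohomology with respect to the given t-structure. Then (C'^{≤0}, C'^{≥0}) is a bounded t-structure on C whose heart has torsion pair (ΣF, T). -/
open CategoryTheory Limits Pretriangulated Triangulated

universe v u

variable {C : Type u} [Category.{v} C] [Preadditive C] [HasZeroObject C] [HasShift C ℤ]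
  [∀ (n : ℤ), (shiftFunctor C n).Additive] [Pretriangulated C]

def tHeart (t : TStructure C) : Set C := {X : C | t.le 0 X ∧ t.ge 0 X}

def tIsBounded (t : TStructure C) : Prop :=
  ∀ X : C, (∃ n : ℤ, t.le n X) ∧ (∃ n : ℤ, t.ge n X)

/-- A choice of truncation `τ^{≤0} M` provided by the t-structure axioms. -/
noncomputable def tauLE (t : TStructure C) (M : C) : C :=
  (t.exists_triangle M 0 1 rfl).choose

/-- A choice of truncation `τ^{≥1} M` provided by the t-structure axioms. -/
noncomputable def tauGE1 (t : TStructure C) (M : C) : C :=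
  (t.exists_triangle M 0 1 rfl).choose_spec.choose

/-- `τ^{≥0} M = Σ (τ^{≥1} (Σ⁻¹ M))`. -/
noncomputable def tauGE0 (t : TStructure C) (M : C) : C :=
  (shiftFunctor C (1 : ℤ)).obj (tauGE1 t ((shiftFunctor C (-1 : ℤ)).obj M))

/-- The zeroth cohomology `H^0(M) = τ^{≤0} τ^{≥0} M` of `M` with respect to the
t-structure `t`; it lies in the heart. -/
noncomputable def tH0 (t : TStructure C) (M : C) : C := tauLE t (tauGE0 t M)

/-- The `m`-th cohomology `H^m(M) = H^0(Σ^m M)` with respect to `t`. -/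
noncomputable def tH (t : TStructure C) (m : ℤ) (M : C) : C :=
  tH0 t ((shiftFunctor C m).obj M)

/-- A torsion pair `(T, F)` in the heart of `t`: both classes are strict subclasses of
the heart, `Hom(T, F) = 0`, and every object `M` of the heart sits in a short exact
sequence (equivalently, a distinguished triangle) `tM → M → M/tM` with `tM ∈ T` and
`M/tM ∈ F`. -/
def IsTorsionPair (t : TStructure C) (T F : Set C) : Prop :=
  T ⊆ tHeart t ∧ F ⊆ tHeart t ∧
  (∀ A B : C, (A ≅ B) → A ∈ T → B ∈ T) ∧
  (∀ A B : C, (A ≅ B) → A ∈ F → B ∈ F) ∧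
  (∀ X Y : C, X ∈ T → Y ∈ F → ∀ f : X ⟶ Y, f = 0) ∧
  (∀ M : C, M ∈ tHeart t → ∃ (X Y : C) (_ : X ∈ T) (_ : Y ∈ F)
    (f : X ⟶ M) (g : M ⟶ Y) (h : Y ⟶ (shiftFunctor C (1 : ℤ)).obj X),
    Triangle.mk f g h ∈ distTriang C)

/-!
Truncation triangles are unique up to isomorphism, so the chosen truncations of the statement
may be replaced by Mathlib's truncation functors, with `H⁰ = τ^{≤0} τ^{≥0}`. The tilted aisle
is `{X ≤ 0, H⁰X ∈ T}` and the shifted coaisle `{Y ≥ 0, H⁰Y ∈ F}`; a map from the first to the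
second factors through `H⁰X → H⁰Y`, hence vanishes.

The truncation triangle of `M` is built without the octahedral axiom: let `P → H⁰M` be the
torsion part, `X` an extension of `P` by `τ^{≤-1}M` mapping to the triangle
`τ^{≤-1}M → M → τ^{≥0}M`, and `Y` the cone of `X → M`. For `W` in the tilted aisle every map
`W → τ^{≥0}M` factors through `P`, and `Hom(W, P[1]) → Hom(W, (τ^{≥0}M)[1])` is injective, so a
four-lemma argument gives `Hom(W, Y) = 0`, which characterises the shifted coaisle. Boundedness
turns `X ≤ 0` into the vanishing of `H^m X` for `m > 0`, which gives the classes of the statement.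
-/

namespace CategoryTheory.Triangulated.TStructure

variable (t : TStructure C)

-- Mathlib has these two instances only for triangulated `C`; they hold in the pretriangulated case.
instance isLE_truncGE_obj_of_isLE (X : C) (a n : ℤ) [t.IsLE X n] :
    t.IsLE ((t.truncGE a).obj X) n := by
  have : t.IsLE (((t.truncLT a).obj X)⟦(1 : ℤ)⟧) (n - 1) := t.isLE_shift _ n 1 (n - 1)
  have : t.IsLE (((t.truncLT a).obj X)⟦(1 : ℤ)⟧) n := t.isLE_of_le _ (n - 1) n
  exact t.isLE₂ _ (rot_of_distTriang _ (t.triangleLTGE_distinguished a X)) n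
    (inferInstance : t.IsLE X n) (inferInstance : t.IsLE (((t.truncLT a).obj X)⟦(1 : ℤ)⟧) n)

instance isGE_truncLE_obj_of_isGE (X : C) (a n : ℤ) [t.IsGE X n] :
    t.IsGE ((t.truncLE a).obj X) n := by
  have : t.IsGE (((t.truncGT a).obj X)⟦(-1 : ℤ)⟧) (n + 1) := t.isGE_shift _ n (-1) (n + 1)
  have : t.IsGE (((t.truncGT a).obj X)⟦(-1 : ℤ)⟧) n := t.isGE_of_ge _ n (n + 1)
  exact t.isGE₂ _ (inv_rot_of_distTriang _ (t.triangleLEGT_distinguished a X)) n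
    (inferInstance : t.IsGE (((t.truncGT a).obj X)⟦(-1 : ℤ)⟧) n) (inferInstance : t.IsGE X n)

lemma nonempty_iso_truncLE_truncGE_of_distinguished (T : Triangle C) (hT : T ∈ distTriang C)
    (a b : ℤ) (h : a + 1 = b) (h₁ : t.IsLE T.obj₁ a) (h₃ : t.IsGE T.obj₃ b) :
    Nonempty (T.obj₁ ≅ (t.truncLE a).obj T.obj₂) ∧
      Nonempty (T.obj₃ ≅ (t.truncGE b).obj T.obj₂) := by
  obtain ⟨e, -⟩ := t.triangle_iso_exists hT (t.triangleLEGE_distinguished a b h T.obj₂)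
    (Iso.refl _) a b h₁ h₃
    (inferInstance : t.IsLE ((t.truncLE a).obj T.obj₂) a)
    (inferInstance : t.IsGE ((t.truncGE b).obj T.obj₂) b)
  have e₁ := Triangle.π₁.mapIso e
  have e₃ := Triangle.π₃.mapIso e
  exact ⟨⟨e₁⟩, ⟨e₃⟩⟩

lemma isZero_truncLEGE_obj_of_isLE (X : C) [t.IsLE X (-1)] :
    IsZero ((t.truncLEGE 0 0).obj X) :=
  (t.truncLE 0).map_isZero (t.isZero_truncGE_obj_of_isLE (-1) 0 (by lia) X)

lemma isZero_truncLEGE_obj_of_isGE (X : C) [t.IsGE X 1] :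
    IsZero ((t.truncLEGE 0 0).obj X) :=
  t.isZero_truncLE_obj_of_isGE 0 1 (by lia) _

noncomputable def truncLEGEIsoTruncGEOfIsLE (X : C) [t.IsLE X 0] :
    (t.truncLEGE 0 0).obj X ≅ (t.truncGE 0).obj X :=
  asIso ((t.truncLEι 0).app _)

noncomputable def truncLEGEIsoTruncLEOfIsGE (X : C) [t.IsGE X 0] :
    (t.truncLEGE 0 0).obj X ≅ (t.truncLE 0).obj X :=
  (t.truncLE 0).mapIso (asIso ((t.truncGEπ 0).app X)).symm

noncomputable def truncLEGEIsoSelfOfIsLEOfIsGE (X : C) [t.IsLE X 0] [t.IsGE X 0] :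
    (t.truncLEGE 0 0).obj X ≅ X :=
  t.truncLEGEIsoTruncGEOfIsLE X ≪≫ (asIso ((t.truncGEπ 0).app X)).symm

lemma isLE_sub_one_of_isZero_truncLEGE (X : C) (n : ℤ) [t.IsLE X n]
    (hX : IsZero ((t.truncLEGE 0 0).obj (X⟦n⟧))) : t.IsLE X (n - 1) := by
  have := t.isLE_shift X n n 0
  have : t.IsLE (X⟦n⟧) (-1) := by
    rw [t.isLE_iff_isZero_truncGE_obj (-1) 0 (by lia)]
    exact hX.of_iso (t.truncLEGEIsoTruncGEOfIsLE _).symm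
  exact t.isLE_of_shift X (n - 1) n (-1)

lemma isGE_add_one_of_isZero_truncLEGE (X : C) (n : ℤ) [t.IsGE X n]
    (hX : IsZero ((t.truncLEGE 0 0).obj (X⟦n⟧))) : t.IsGE X (n + 1) := by
  have := t.isGE_shift X n n 0
  have : t.IsGE (X⟦n⟧) 1 := by
    rw [t.isGE_iff_isZero_truncLE_obj 0 1 (by lia)]
    exact hX.of_iso (t.truncLEGEIsoTruncLEOfIsGE _).symm
  exact t.isGE_of_shift X (n + 1) n 1

lemma isLE_of_forall_isZero_truncLEGE {X : C} (hX : t.minus X) (n : ℤ)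
    (h : ∀ m, n < m → IsZero ((t.truncLEGE 0 0).obj (X⟦m⟧))) : t.IsLE X n := by
  obtain ⟨N, hN⟩ := hX
  suffices ∀ N, n ≤ N → t.IsLE X N → t.IsLE X n from
    this (max N n) (le_max_right _ _) (t.isLE_of_le X N _ (le_max_left _ _))
  intro N hnN
  induction N, hnN using Int.leInduction with
  | base => exact id
  | succ N hnN ih =>
    intro _
    have := t.isLE_sub_one_of_isZero_truncLEGE X (N + 1) (h _ (by lia))
    exact ih (by simpa using this)

lemma isGE_of_forall_isZero_truncLEGE {X : C} (hX : t.plus X) (n : ℤ)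
    (h : ∀ m, m < n → IsZero ((t.truncLEGE 0 0).obj (X⟦m⟧))) : t.IsGE X n := by
  obtain ⟨N, hN⟩ := hX
  suffices ∀ N, N ≤ n → t.IsGE X N → t.IsGE X n from
    this (min N n) (min_le_right _ _) (t.isGE_of_ge X _ N (min_le_left _ _))
  intro N hNn
  induction N, hNn using Int.leInductionDown with
  | base => exact id
  | pred N hNn ih =>
    intro _
    have := t.isGE_add_one_of_isZero_truncLEGE X (N - 1) (h _ (by lia))
    exact ih (by simpa using this)

lemma nonempty_shift_truncLE_truncGE_iso (X : C) (a n n' b b' : ℤ) (h : a + n' = n)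
    (hb : n + 1 = b) (hb' : n' + 1 = b') :
    Nonempty (((t.truncLE n).obj X)⟦a⟧ ≅ (t.truncLE n').obj (X⟦a⟧)) ∧
      Nonempty (((t.truncGE b).obj X)⟦a⟧ ≅ (t.truncGE b').obj (X⟦a⟧)) :=
  t.nonempty_iso_truncLE_truncGE_of_distinguished _
    (Triangle.shift_distinguished _ (t.triangleLEGE_distinguished n b hb X) a) n' b' hb'
    (t.isLE_shift ((t.truncLE n).obj X) n a n') (t.isGE_shift ((t.truncGE b).obj X) b a b')

end CategoryTheory.Triangulated.TStructure

lemma nonempty_tauLE_iso_and_tauGE1_iso (t : TStructure C) (M : C) :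
    Nonempty (tauLE t M ≅ (t.truncLE 0).obj M) ∧ Nonempty (tauGE1 t M ≅ (t.truncGE 1).obj M) := by
  obtain ⟨hA, hB, _, _, _, mem⟩ := (t.exists_triangle M 0 1 rfl).choose_spec.choose_spec
  exact t.nonempty_iso_truncLE_truncGE_of_distinguished _ mem 0 1 rfl ⟨hA⟩ ⟨hB⟩

lemma nonempty_tH0_iso (t : TStructure C) (M : C) :
    Nonempty (tH0 t M ≅ (t.truncLEGE 0 0).obj M) := by
  obtain ⟨e₁⟩ := (nonempty_tauLE_iso_and_tauGE1_iso t ((shiftFunctor C (-1 : ℤ)).obj M)).2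
  obtain ⟨e₂⟩ := (t.nonempty_shift_truncLE_truncGE_iso (M⟦(-1 : ℤ)⟧) 1 0 (-1) 1 0 rfl rfl rfl).2
  have e₃ : tauGE0 t M ≅ (t.truncGE 0).obj M :=
    (shiftFunctor C (1 : ℤ)).mapIso e₁ ≪≫ e₂ ≪≫
      (t.truncGE 0).mapIso ((shiftFunctorCompIsoId C (-1 : ℤ) 1 (by lia)).app M)
  obtain ⟨e₄⟩ := (nonempty_tauLE_iso_and_tauGE1_iso t (tauGE0 t M)).1
  exact ⟨e₄ ≪≫ (t.truncLE 0).mapIso e₃⟩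

namespace CategoryTheory.Pretriangulated

variable {T₁ T₂ : Triangle C} (hT₁ : T₁ ∈ distTriang C) (hT₂ : T₂ ∈ distTriang C)
  (φ : T₁ ⟶ T₂) [IsIso φ.hom₁] {W : C}
include hT₁ hT₂

lemma exists_eq_comp_hom₂_of_isIso_hom₁ (x : W ⟶ T₂.obj₂)
    (hx : ∃ σ, x ≫ T₂.mor₂ = σ ≫ φ.hom₃) : ∃ ρ, x = ρ ≫ φ.hom₂ := by
  obtain ⟨σ, hσ⟩ := hx
  have hσ₃ : σ ≫ T₁.mor₃ = 0 := by
    rw [← cancel_mono (φ.hom₁⟦(1 : ℤ)⟧'), zero_comp, Category.assoc, φ.comm₃,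
      ← Category.assoc, ← hσ, Category.assoc, comp_distTriang_mor_zero₂₃ _ hT₂, comp_zero]
  obtain ⟨ρ₀, hρ₀⟩ := T₁.coyoneda_exact₃ hT₁ σ hσ₃
  have hx₂ : (x - ρ₀ ≫ φ.hom₂) ≫ T₂.mor₂ = 0 := by
    rw [Preadditive.sub_comp, hσ, hρ₀, Category.assoc, Category.assoc, φ.comm₂, sub_self]
  obtain ⟨τ, hτ⟩ := T₂.coyoneda_exact₂ hT₂ _ hx₂
  refine ⟨ρ₀ + τ ≫ inv φ.hom₁ ≫ T₁.mor₁, ?_⟩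
  rw [Preadditive.add_comp, Category.assoc, Category.assoc, φ.comm₁, IsIso.inv_hom_id_assoc,
    ← hτ, add_sub_cancel]

lemma eq_zero_of_comp_shift_map_hom₂_eq_zero
    (hsurj : ∀ y : W ⟶ T₂.obj₃, ∃ z, y = z ≫ φ.hom₃)
    (hinj : ∀ y : W ⟶ T₁.obj₃⟦(1 : ℤ)⟧, y ≫ φ.hom₃⟦(1 : ℤ)⟧' = 0 → y = 0)
    (κ : W ⟶ T₁.obj₂⟦(1 : ℤ)⟧) (hκ : κ ≫ φ.hom₂⟦(1 : ℤ)⟧' = 0) : κ = 0 := by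
  have hκ₂ : κ ≫ T₁.mor₂⟦(1 : ℤ)⟧' = 0 := hinj _ (by
    rw [Category.assoc, ← Functor.map_comp, φ.comm₂, Functor.map_comp, ← Category.assoc, hκ,
      zero_comp])
  obtain ⟨lam, hlam⟩ : ∃ lam : W ⟶ T₁.obj₁⟦(1 : ℤ)⟧, κ = lam ≫ T₁.mor₁⟦(1 : ℤ)⟧' := by
    obtain ⟨lam, hlam⟩ : ∃ lam : W ⟶ T₁.obj₁⟦(1 : ℤ)⟧, κ = lam ≫ (-T₁.mor₁⟦(1 : ℤ)⟧') :=
      Triangle.coyoneda_exact₁ _ (rot_of_distTriang _ hT₁) κ hκ₂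
    exact ⟨-lam, by rw [hlam, Preadditive.comp_neg, Preadditive.neg_comp]⟩
  have hlam₁ : (lam ≫ φ.hom₁⟦(1 : ℤ)⟧') ≫ T₂.mor₁⟦(1 : ℤ)⟧' = 0 := by
    rw [Category.assoc, ← Functor.map_comp, ← φ.comm₁, Functor.map_comp, ← Category.assoc,
      ← hlam, hκ]
  obtain ⟨μ, hμ⟩ := T₂.coyoneda_exact₁ hT₂ _ hlam₁
  obtain ⟨z, rfl⟩ := hsurj μ
  have hz : lam = z ≫ T₁.mor₃ := by
    rw [← cancel_mono (φ.hom₁⟦(1 : ℤ)⟧'), hμ, Category.assoc, Category.assoc, φ.comm₃]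
  rw [hlam, hz, Category.assoc, comp_distTriang_mor_zero₃₁ _ hT₁, comp_zero]

lemma eq_zero_of_hom_to_cone_hom₂ {Y : C} {g : T₂.obj₂ ⟶ Y} {h : Y ⟶ T₁.obj₂⟦(1 : ℤ)⟧}
    (hcone : Triangle.mk φ.hom₂ g h ∈ distTriang C)
    (hsurj : ∀ y : W ⟶ T₂.obj₃, ∃ z, y = z ≫ φ.hom₃)
    (hinj : ∀ y : W ⟶ T₁.obj₃⟦(1 : ℤ)⟧, y ≫ φ.hom₃⟦(1 : ℤ)⟧' = 0 → y = 0)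
    (f : W ⟶ Y) : f = 0 := by
  have h₁₂ : φ.hom₂ ≫ g = 0 := comp_distTriang_mor_zero₁₂ _ hcone
  have h₃₁ : h ≫ φ.hom₂⟦(1 : ℤ)⟧' = 0 := comp_distTriang_mor_zero₃₁ _ hcone
  have hfh : f ≫ h = 0 := eq_zero_of_comp_shift_map_hom₂_eq_zero hT₁ hT₂ φ hsurj hinj _ (by
    rw [Category.assoc, h₃₁, comp_zero])
  obtain ⟨x, hx⟩ : ∃ x : W ⟶ T₂.obj₂, f = x ≫ g := Triangle.coyoneda_exact₃ _ hcone f hfh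
  obtain ⟨ρ, hρ⟩ := exists_eq_comp_hom₂_of_isIso_hom₁ hT₁ hT₂ φ x (hsurj _)
  rw [hx, hρ, Category.assoc, h₁₂, comp_zero]

end CategoryTheory.Pretriangulated

-- The classes `C'^{≤0}` and `C'^{≥1}` (not `C'^{≥0}`) of the tilted t-structure.
def tiltLE (t : TStructure C) (T : Set C) : ObjectProperty C :=
  fun X => t.IsLE X 0 ∧ (t.truncLEGE 0 0).obj X ∈ T

def tiltGT (t : TStructure C) (F : Set C) : ObjectProperty C :=
  fun X => t.IsGE X 0 ∧ (t.truncLEGE 0 0).obj X ∈ F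

namespace IsTorsionPair

variable {t : TStructure C} {T F : Set C} (hTF : IsTorsionPair t T F)
include hTF

lemma isLE_of_mem_left {X : C} (hX : X ∈ T) : t.IsLE X 0 := ⟨(hTF.1 hX).1⟩

lemma isGE_of_mem_left {X : C} (hX : X ∈ T) : t.IsGE X 0 := ⟨(hTF.1 hX).2⟩

lemma isLE_of_mem_right {X : C} (hX : X ∈ F) : t.IsLE X 0 := ⟨(hTF.2.1 hX).1⟩

lemma isGE_of_mem_right {X : C} (hX : X ∈ F) : t.IsGE X 0 := ⟨(hTF.2.1 hX).2⟩

lemma mem_left_of_iso {X Y : C} (e : X ≅ Y) (hX : X ∈ T) : Y ∈ T := hTF.2.2.1 X Y e hX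

lemma mem_right_of_iso {X Y : C} (e : X ≅ Y) (hX : X ∈ F) : Y ∈ F := hTF.2.2.2.1 X Y e hX

lemma hom_eq_zero {X Y : C} (hX : X ∈ T) (hY : Y ∈ F) (f : X ⟶ Y) : f = 0 :=
  hTF.2.2.2.2.1 X Y hX hY f

lemma exists_distinguished {A : C} [t.IsLE A 0] [t.IsGE A 0] :
    ∃ (P Q : C) (_ : P ∈ T) (_ : Q ∈ F) (i : P ⟶ A) (p : A ⟶ Q) (w : Q ⟶ P⟦(1 : ℤ)⟧),
      Triangle.mk i p w ∈ distTriang C :=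
  hTF.2.2.2.2.2 A ⟨t.le_of_isLE A 0, t.ge_of_isGE A 0⟩

lemma mem_of_isZero {Z : C} (hZ : IsZero Z) : Z ∈ T ∧ Z ∈ F := by
  have := t.isLE_of_isZero hZ 0
  have := t.isGE_of_isZero hZ 0
  obtain ⟨P, Q, hP, hQ, i, p, w, hPQ⟩ := hTF.exists_distinguished (A := Z)
  have := hTF.isLE_of_mem_left hP
  have := hTF.isGE_of_mem_right hQ
  have : IsIso w := (Triangle.isZero₂_iff_isIso₃ _ hPQ).1 hZ
  have := t.isLE_shift P 0 1 (-1)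
  have := t.isLE_of_iso (asIso w).symm (-1)
  have hQ₀ : IsZero Q := t.isZero Q (-1) 0
  have hP₀ : IsZero P := (Triangle.isZero₁_iff _ hPQ).2 ⟨hZ.eq_of_tgt _ _, hQ₀.eq_of_src _ _⟩
  exact ⟨hTF.mem_left_of_iso (hP₀.iso hZ) hP, hTF.mem_right_of_iso (hQ₀.iso hZ) hQ⟩

lemma mem_right_of_forall_hom_eq_zero {A : C} [t.IsLE A 0] [t.IsGE A 0]
    (hA : ∀ P ∈ T, ∀ f : P ⟶ A, f = 0) : A ∈ F := by
  obtain ⟨P, Q, hP, hQ, i, p, w, hPQ⟩ := hTF.exists_distinguished (A := A)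
  have hi : i = 0 := hA P hP i
  have hi₁ : 𝟙 (P⟦(1 : ℤ)⟧) ≫ (-i⟦(1 : ℤ)⟧') = 0 := by
    rw [hi, Functor.map_zero, neg_zero, comp_zero]
  obtain ⟨s, hs⟩ : ∃ s : P⟦(1 : ℤ)⟧ ⟶ Q, 𝟙 _ = s ≫ w :=
    Triangle.coyoneda_exact₃ _ (rot_of_distTriang _ hPQ) (𝟙 _) hi₁
  have := hTF.isLE_of_mem_left hP
  have := hTF.isGE_of_mem_right hQ
  have := t.isLE_shift P 0 1 (-1)
  have hw : w = 0 := by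
    rw [← Category.comp_id w, hs, t.zero s (-1) 0, zero_comp, comp_zero]
  have : IsIso p := (Triangle.isZero₁_iff_isIso₂ _ hPQ).1
    ((Triangle.isZero₁_iff _ hPQ).2 ⟨hi, hw⟩)
  exact hTF.mem_right_of_iso (asIso p).symm hQ

lemma tiltLE_of_iso {X Y : C} (e : X ≅ Y) (hX : tiltLE t T X) : tiltLE t T Y :=
  have := hX.1
  ⟨t.isLE_of_iso e 0, hTF.mem_left_of_iso ((t.truncLEGE 0 0).mapIso e) hX.2⟩

lemma tiltGT_of_iso {X Y : C} (e : X ≅ Y) (hX : tiltGT t F X) : tiltGT t F Y :=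
  have := hX.1
  ⟨t.isGE_of_iso e 0, hTF.mem_right_of_iso ((t.truncLEGE 0 0).mapIso e) hX.2⟩

lemma tiltLE_of_isLE (X : C) [t.IsLE X (-1)] : tiltLE t T X :=
  ⟨t.isLE_of_le X (-1) 0, (hTF.mem_of_isZero (t.isZero_truncLEGE_obj_of_isLE X)).1⟩

lemma tiltGT_of_isGE (X : C) [t.IsGE X 1] : tiltGT t F X :=
  ⟨t.isGE_of_ge X 0 1, (hTF.mem_of_isZero (t.isZero_truncLEGE_obj_of_isGE X)).2⟩

lemma tiltLE_of_mem_left {X : C} (hX : X ∈ T) : tiltLE t T X :=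
  have := hTF.isLE_of_mem_left hX
  have := hTF.isGE_of_mem_left hX
  ⟨‹_›, hTF.mem_left_of_iso (t.truncLEGEIsoSelfOfIsLEOfIsGE X).symm hX⟩

lemma tiltGT_of_mem_right {X : C} (hX : X ∈ F) : tiltGT t F X :=
  have := hTF.isLE_of_mem_right hX
  have := hTF.isGE_of_mem_right hX
  ⟨‹_›, hTF.mem_right_of_iso (t.truncLEGEIsoSelfOfIsLEOfIsGE X).symm hX⟩

lemma hom_eq_zero_of_tiltLE_of_tiltGT {X Y : C} (hX : tiltLE t T X) (hY : tiltGT t F Y)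
    (f : X ⟶ Y) : f = 0 := by
  obtain ⟨_, hXT⟩ := hX
  obtain ⟨_, hYF⟩ := hY
  have hf : f = (t.truncGEπ 0).app X ≫ t.liftTruncLE ((t.truncGE 0).map f) 0 ≫
      (t.truncLEι 0).app _ ≫ inv ((t.truncGEπ 0).app Y) := by
    simp
  rw [hf, hTF.hom_eq_zero (hTF.mem_left_of_iso (t.truncLEGEIsoTruncGEOfIsLE X) hXT) hYF
    (t.liftTruncLE _ 0), zero_comp, comp_zero]

section

variable {W N P Q : C} (hW : tiltLE t T W) {i : P ⟶ (t.truncLE 0).obj N}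
  {p : (t.truncLE 0).obj N ⟶ Q} {w : Q ⟶ P⟦(1 : ℤ)⟧} (hPQ : Triangle.mk i p w ∈ distTriang C)
  (hQ : Q ∈ F)
include hW hPQ hQ

lemma exists_eq_comp_of_tiltLE (x : W ⟶ N) : ∃ σ : W ⟶ P, x = σ ≫ i ≫ (t.truncLEι 0).app N := by
  have := hW.1
  obtain ⟨σ, hσ⟩ : ∃ σ : W ⟶ P, t.liftTruncLE x 0 = σ ≫ i :=
    Triangle.coyoneda_exact₂ _ hPQ (t.liftTruncLE x 0)
      (hTF.hom_eq_zero_of_tiltLE_of_tiltGT hW (hTF.tiltGT_of_mem_right hQ) _)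
  exact ⟨σ, by rw [← Category.assoc, ← hσ, TStructure.liftTruncLE_ι]⟩

lemma eq_zero_of_tiltLE_of_comp_eq_zero (y : W ⟶ P⟦(1 : ℤ)⟧)
    (hy : y ≫ (i ≫ (t.truncLEι 0).app N)⟦(1 : ℤ)⟧' = 0) : y = 0 := by
  have := hW.1
  have h₁ : (y ≫ i⟦(1 : ℤ)⟧') ≫ ((t.truncLEι 0).app N)⟦(1 : ℤ)⟧' = 0 := by
    rw [Category.assoc, ← Functor.map_comp, hy]
  obtain ⟨z, hz⟩ : ∃ z : W ⟶ (t.truncGT 0).obj N, y ≫ i⟦(1 : ℤ)⟧' = z ≫ (t.truncGTδLE 0).app N :=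
    Triangle.coyoneda_exact₁ _ (t.triangleLEGT_distinguished 0 N) _ h₁
  have h₂ : y ≫ i⟦(1 : ℤ)⟧' = 0 := by rw [hz, t.zero z 0 (0 + 1), zero_comp]
  obtain ⟨z', hz'⟩ : ∃ z' : W ⟶ Q, y = z' ≫ w := Triangle.coyoneda_exact₁ _ hPQ y h₂
  rw [hz', hTF.hom_eq_zero_of_tiltLE_of_tiltGT hW (hTF.tiltGT_of_mem_right hQ) z', zero_comp]

end

lemma tiltLE_of_distinguished {L X P : C} {u : L ⟶ X} {v : X ⟶ P} {δ : P ⟶ L⟦(1 : ℤ)⟧}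
    (hT : Triangle.mk u v δ ∈ distTriang C) [t.IsLE L (-1)] (hP : P ∈ T) : tiltLE t T X := by
  have := hTF.isLE_of_mem_left hP
  have := hTF.isGE_of_mem_left hP
  have := t.isLE_of_le L (-1) 0
  have : t.IsLE X 0 := t.isLE₂ _ hT 0 ‹_› ‹_›
  obtain ⟨e⟩ := (t.nonempty_iso_truncLE_truncGE_of_distinguished _ hT (-1) 0 (by lia)
    ‹_› ‹_›).2
  exact ⟨‹_›, hTF.mem_left_of_iso (e ≪≫ (t.truncLEGEIsoTruncGEOfIsLE X).symm) hP⟩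

lemma tiltGT_of_forall_hom_eq_zero {Y : C} (hY : ∀ W, tiltLE t T W → ∀ f : W ⟶ Y, f = 0) :
    tiltGT t F Y := by
  have : t.IsGE Y 0 := by
    rw [t.isGE_iff_orthogonal (-1) 0 (by lia)]
    intro W f _
    exact hY W (hTF.tiltLE_of_isLE W) f
  refine ⟨this, hTF.mem_right_of_iso (t.truncLEGEIsoTruncLEOfIsGE Y).symm
    (hTF.mem_right_of_forall_hom_eq_zero fun P hP f => ?_)⟩
  have := hTF.isLE_of_mem_left hP
  exact t.to_truncLE_obj_ext (by rw [zero_comp]; exact hY P (hTF.tiltLE_of_mem_left hP) _)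

lemma exists_distinguished_tiltLE_tiltGT (M : C) :
    ∃ (X Y : C) (_ : tiltLE t T X) (_ : tiltGT t F Y) (f : X ⟶ M) (g : M ⟶ Y)
      (h : Y ⟶ X⟦(1 : ℤ)⟧), Triangle.mk f g h ∈ distTriang C := by
  obtain ⟨P, Q, hP, hQ, i, p, w, hPQ⟩ :=
    hTF.exists_distinguished (A := (t.truncLE 0).obj ((t.truncGE 0).obj M))
  have h₀ : (-1 : ℤ) + 1 = 0 := by lia
  let δ : (t.truncGE 0).obj M ⟶ ((t.truncLE (-1)).obj M)⟦(1 : ℤ)⟧ :=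
    (t.truncGEδLE (-1) 0 h₀).app M
  have hT₂ : Triangle.mk ((t.truncLEι (-1)).app M) ((t.truncGEπ 0).app M) δ ∈ distTriang C :=
    t.triangleLEGE_distinguished (-1) 0 h₀ M
  let j : P ⟶ (t.truncGE 0).obj M := i ≫ (t.truncLEι 0).app _
  obtain ⟨X, u, v, hT₁⟩ := distinguished_cocone_triangle₂ (j ≫ δ)
  have hcomm : (j ≫ δ) ≫ (𝟙 ((t.truncLE (-1)).obj M))⟦(1 : ℤ)⟧' = j ≫ δ := by
    rw [CategoryTheory.Functor.map_id, Category.comp_id]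
  obtain ⟨ξ, hξ₁, hξ₂⟩ := complete_distinguished_triangle_morphism₂ _ _ hT₁ hT₂ (𝟙 _) j hcomm
  let φ : Triangle.mk u v (j ≫ δ) ⟶ Triangle.mk _ _ δ :=
    { hom₁ := 𝟙 _, hom₂ := ξ, hom₃ := j, comm₁ := hξ₁, comm₂ := hξ₂, comm₃ := hcomm }
  have : IsIso φ.hom₁ := inferInstanceAs (IsIso (𝟙 _))
  obtain ⟨Y, g, h, hcone⟩ := distinguished_cocone_triangle ξ
  refine ⟨X, Y, hTF.tiltLE_of_distinguished hT₁ hP,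
    hTF.tiltGT_of_forall_hom_eq_zero fun W hW f => ?_, ξ, g, h, hcone⟩
  exact eq_zero_of_hom_to_cone_hom₂ hT₁ hT₂ φ hcone (hTF.exists_eq_comp_of_tiltLE hW hPQ hQ)
    (hTF.eq_zero_of_tiltLE_of_comp_eq_zero hW hPQ hQ) f

def tilt : TStructure C where
  le n X := tiltLE t T (X⟦n⟧)
  ge n X := tiltGT t F (X⟦n - 1⟧)
  le_isClosedUnderIsomorphisms n := ⟨fun e => hTF.tiltLE_of_iso ((shiftFunctor C n).mapIso e)⟩
  ge_isClosedUnderIsomorphisms n :=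
    ⟨fun e => hTF.tiltGT_of_iso ((shiftFunctor C (n - 1)).mapIso e)⟩
  le_shift n a n' h X := hTF.tiltLE_of_iso ((shiftFunctorAdd' C a n' n h).app X)
  ge_shift n a n' h X := hTF.tiltGT_of_iso ((shiftFunctorAdd' C a (n' - 1) (n - 1) (by lia)).app X)
  zero' X Y f hX hY := hTF.hom_eq_zero_of_tiltLE_of_tiltGT
    (hTF.tiltLE_of_iso ((shiftFunctorZero C ℤ).app X) hX)
    (hTF.tiltGT_of_iso ((shiftFunctorZero' C ((1 : ℤ) - 1) (by lia)).app Y) hY) f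
  le_zero_le X hX := by
    have := hX.1
    have := t.isLE_of_shift X 0 0 0
    have := t.isLE_shift X 0 1 (-1)
    exact hTF.tiltLE_of_isLE _
  ge_one_le X hX := by
    have := hX.1
    have := t.isGE_of_shift X 0 (1 - 1) 0
    have := t.isGE_shift X 0 (0 - 1) 1
    exact hTF.tiltGT_of_isGE _
  exists_triangle_zero_one A := by
    obtain ⟨X, Y, hX, hY, f, g, h, hT⟩ := hTF.exists_distinguished_tiltLE_tiltGT A
    exact ⟨X, Y, hTF.tiltLE_of_iso ((shiftFunctorZero C ℤ).app X).symm hX,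
      hTF.tiltGT_of_iso ((shiftFunctorZero' C ((1 : ℤ) - 1) (by lia)).app Y).symm hY, f, g, h, hT⟩

lemma tilt_le_zero_iff (X : C) : hTF.tilt.le 0 X ↔ tiltLE t T X :=
  ⟨hTF.tiltLE_of_iso ((shiftFunctorZero C ℤ).app X),
    hTF.tiltLE_of_iso ((shiftFunctorZero C ℤ).app X).symm⟩

lemma tilt_ge_zero_iff (X : C) : hTF.tilt.ge 0 X ↔ tiltGT t F (X⟦(-1 : ℤ)⟧) := by
  show tiltGT t F (X⟦(0 : ℤ) - 1⟧) ↔ _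
  rw [zero_sub]

lemma mem_tHeart_tilt_iff (X : C) :
    X ∈ tHeart hTF.tilt ↔ tiltLE t T X ∧ tiltGT t F (X⟦(-1 : ℤ)⟧) :=
  and_congr (hTF.tilt_le_zero_iff X) (hTF.tilt_ge_zero_iff X)

lemma tiltLE_iff_of_isBounded (hb : tIsBounded t) (M : C) :
    tiltLE t T M ↔ (∀ m : ℤ, 0 < m → IsZero (tH t m M)) ∧ tH t 0 M ∈ T := by
  have hH (m : ℤ) : tH t m M ≅ (t.truncLEGE 0 0).obj (M⟦m⟧) := (nonempty_tH0_iso t _).some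
  have hH₀ : tH t 0 M ≅ (t.truncLEGE 0 0).obj M :=
    hH 0 ≪≫ (t.truncLEGE 0 0).mapIso ((shiftFunctorZero C ℤ).app M)
  constructor
  · rintro ⟨hM, hMT⟩
    refine ⟨fun m hm => ?_, hTF.mem_left_of_iso hH₀.symm hMT⟩
    have := t.isLE_shift M 0 m (-m)
    have := t.isLE_of_le (M⟦m⟧) (-m) (-1)
    exact (t.isZero_truncLEGE_obj_of_isLE _).of_iso (hH m)
  · rintro ⟨hM, hMT⟩
    obtain ⟨n, hn⟩ := (hb M).1
    exact ⟨t.isLE_of_forall_isZero_truncLEGE ⟨n, ⟨hn⟩⟩ 0 fun m hm => (hM m hm).of_iso (hH m).symm,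
      hTF.mem_left_of_iso hH₀ hMT⟩

lemma tiltGT_shift_iff_of_isBounded (hb : tIsBounded t) (M : C) :
    tiltGT t F (M⟦(-1 : ℤ)⟧) ↔ (∀ m : ℤ, m < -1 → IsZero (tH t m M)) ∧ tH t (-1) M ∈ F := by
  have hH (m : ℤ) : tH t m M ≅ (t.truncLEGE 0 0).obj (M⟦m⟧) := (nonempty_tH0_iso t _).some
  constructor
  · rintro ⟨hM, hMF⟩
    refine ⟨fun m hm => ?_, hTF.mem_right_of_iso (hH (-1)).symm hMF⟩
    have := t.isGE_of_shift M (-1) (-1) 0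
    have := t.isGE_shift M (-1) m (-1 - m)
    have := t.isGE_of_ge (M⟦m⟧) 1 (-1 - m)
    exact (t.isZero_truncLEGE_obj_of_isGE _).of_iso (hH m)
  · rintro ⟨hM, hMF⟩
    obtain ⟨n, hn⟩ := (hb M).2
    have := t.isGE_of_forall_isZero_truncLEGE ⟨n, ⟨hn⟩⟩ (-1)
      fun m hm => (hM m hm).of_iso (hH m).symm
    exact ⟨t.isGE_shift M (-1) (-1) 0, hTF.mem_right_of_iso (hH (-1)) hMF⟩

lemma tilt_isBounded (hb : tIsBounded t) : tIsBounded hTF.tilt := by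
  intro X
  obtain ⟨⟨a, ha⟩, ⟨b, hb⟩⟩ := hb X
  have : t.IsLE X a := ⟨ha⟩
  have : t.IsGE X b := ⟨hb⟩
  have := t.isLE_shift X a (a + 1) (-1)
  have := t.isGE_shift X b (b - 1) 1
  exact ⟨⟨a + 1, hTF.tiltLE_of_isLE _⟩, ⟨b, hTF.tiltGT_of_isGE _⟩⟩

lemma isTorsionPair_tilt :
    IsTorsionPair hTF.tilt {M : C | ∃ Y ∈ F, Nonempty (M ≅ Y⟦(1 : ℤ)⟧)} T := by
  refine ⟨?_, ?_, ?_, fun A B e => hTF.mem_left_of_iso e, ?_, ?_⟩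
  · rintro M ⟨Z, hZ, ⟨e⟩⟩
    have := hTF.isLE_of_mem_right hZ
    have := t.isLE_shift Z 0 1 (-1)
    exact (hTF.mem_tHeart_tilt_iff M).2 ⟨hTF.tiltLE_of_iso e.symm (hTF.tiltLE_of_isLE _),
      hTF.tiltGT_of_iso (((shiftFunctorCompIsoId C (1 : ℤ) (-1) (by lia)).app Z).symm ≪≫
        (shiftFunctor C (-1 : ℤ)).mapIso e.symm) (hTF.tiltGT_of_mem_right hZ)⟩
  · intro W hW
    have := hTF.isGE_of_mem_left hW
    have := t.isGE_shift W 0 (-1) 1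
    exact (hTF.mem_tHeart_tilt_iff W).2 ⟨hTF.tiltLE_of_mem_left hW, hTF.tiltGT_of_isGE _⟩
  · rintro A B e ⟨Z, hZ, ⟨e'⟩⟩
    exact ⟨Z, hZ, ⟨e.symm ≪≫ e'⟩⟩
  · rintro X W ⟨Z, hZ, ⟨e⟩⟩ hW f
    have := hTF.isLE_of_mem_right hZ
    have := t.isLE_shift Z 0 1 (-1)
    have := t.isLE_of_iso e.symm (-1)
    have := hTF.isGE_of_mem_left hW
    exact t.zero f (-1) 0
  · intro M hM
    obtain ⟨⟨_, hMT⟩, ⟨_, hMF⟩⟩ := (hTF.mem_tHeart_tilt_iff M).1 hM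
    obtain ⟨e⟩ := (t.nonempty_shift_truncLE_truncGE_iso M (-1) (-1) 0 0 1 (by lia) rfl rfl).1
    refine ⟨_, _, ⟨_, hTF.mem_right_of_iso
        (t.truncLEGEIsoTruncLEOfIsGE (M⟦(-1 : ℤ)⟧) ≪≫ e.symm) hMF,
        ⟨((shiftFunctorCompIsoId C (-1 : ℤ) 1 (by lia)).app _).symm⟩⟩,
      hTF.mem_left_of_iso (t.truncLEGEIsoTruncGEOfIsLE M) hMT, _, _, _,
      t.triangleLEGE_distinguished (-1) 0 (by lia) M⟩

end IsTorsionPair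

theorem statement9 (t : TStructure C) (hbounded : tIsBounded t) (T F : Set C)
    (hTF : IsTorsionPair t T F) :
    ∃ t' : TStructure C,
      {X : C | t'.le 0 X} =
        {M : C | (∀ m : ℤ, 0 < m → IsZero (tH t m M)) ∧ tH t 0 M ∈ T} ∧
      {X : C | t'.ge 0 X} =
        {M : C | (∀ m : ℤ, m < -1 → IsZero (tH t m M)) ∧ tH t (-1) M ∈ F} ∧
      tIsBounded t' ∧
      IsTorsionPair t' {M : C | ∃ Y ∈ F, Nonempty (M ≅ (shiftFunctor C (1 : ℤ)).obj Y)} T :=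
  ⟨hTF.tilt,
    Set.ext fun X => (hTF.tilt_le_zero_iff X).trans (hTF.tiltLE_iff_of_isBounded hbounded X),
    Set.ext fun X => (hTF.tilt_ge_zero_iff X).trans (hTF.tiltGT_shift_iff_of_isBounded hbounded X),
    hTF.tilt_isBounded hbounded, hTF.isTorsionPair_tilt⟩
end

section
/- Let C be a triangulated category and X_1, …, X_r a simple-minded collection in C. Fix i and let X_i' := ΣX_i, and for j ≠ i assume Hom(X_i, ΣX_i) = 0, so the extension closure of X_i is add(X_i); let g_j: Σ^{-1}X_j → X_{ij} be a minimal left add(X_i)-approximation and X_j' its cone. Then the right mutation of the collection X_1', …, X_r' at index i recovers X_1, …, X_r up to isomorphism: in the defining triangle Σ^{-1}X_j → X_{ij} → X_j' → X_j, the map X_{ij} → X_j' is a minimal right add(ΣX_i)-approximation of X_j' shifted appropriately. -/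
/-!
Since `X_{ij} ∈ add(X_i)` and `Hom(X_i, X_j) = Hom(X_i, Σ⁻¹X_j) = 0`, the exact Hom-sequence of
the triangle `Σ⁻¹X_j → X_{ij} → X_j' → X_j` lifts every map from `add(X_i)` to `X_j'` along
`X_{ij} → X_j'`, and an endomorphism `h` of `X_{ij}` fixing that map has `h - 1` factoring
through `Σ⁻¹X_j`, so `h = 1`. Rotating the triangle exhibits `X_j` as the cone of the
approximation.
-/

open CategoryTheory Limits Pretriangulated Triangulated

universe v u

variable (C : Type u) [Category.{v} C] [Preadditive C] [HasZeroObject C] [HasShift C ℤ]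
  [∀ (n : ℤ), (shiftFunctor C n).Additive] [Pretriangulated C]

def additiveClosure (X : Set C) : Set C :=
  ⋂₀ {S : Set C | X ⊆ S ∧ (∀ A B : C, (A ≅ B) → A ∈ S → B ∈ S) ∧
      (∀ Z : C, IsZero Z → Z ∈ S) ∧ (∀ A B : C, A ∈ S → B ∈ S → (A ⊞ B) ∈ S) ∧
      (∀ X Y : C, (∃ (i : X ⟶ Y) (p : Y ⟶ X), i ≫ p = 𝟙 X) → Y ∈ S → X ∈ S)}

def IsSMC {r : ℕ} (X : Fin r → C) : Prop :=
  (∀ i j (m : ℤ), m < 0 → ∀ f : X i ⟶ (shiftFunctor C m).obj (X j), f = 0) ∧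
  (∀ i, (𝟙 (X i) : X i ⟶ X i) ≠ 0 ∧ ∀ f : X i ⟶ X i, f = 0 ∨ IsIso f) ∧
  (∀ i j, i ≠ j → ∀ f : X i ⟶ X j, f = 0) ∧
  (∀ Z : C, Z ∈ thickClosure C (Set.range X))

/-- `f : A ⟶ B` is a minimal left `S`-approximation of `A`. -/
def IsMinLeftApprox (S : Set C) {A B : C} (f : A ⟶ B) : Prop :=
  B ∈ S ∧ (∀ B' : C, B' ∈ S → ∀ g : A ⟶ B', ∃ h : B ⟶ B', f ≫ h = g) ∧
  (∀ h : B ⟶ B, f ≫ h = f → IsIso h)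

/-- `f : A ⟶ B` is a minimal right `S`-approximation of `B`. -/
def IsMinRightApprox (S : Set C) {A B : C} (f : A ⟶ B) : Prop :=
  A ∈ S ∧ (∀ A' : C, A' ∈ S → ∀ g : A' ⟶ B, ∃ h : A' ⟶ A, h ≫ f = g) ∧
  (∀ h : A ⟶ A, h ≫ f = f → IsIso h)

variable {C}


lemma hom_eq_zero_of_mem_additiveClosure {S : Set C} {T : C}
    (h₀ : ∀ B ∈ S, ∀ f : B ⟶ T, f = 0) {A : C} (hA : A ∈ additiveClosure C S)
    (f : A ⟶ T) : f = 0 := by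
  refine hA {A : C | ∀ f : A ⟶ T, f = 0} ⟨h₀, ?_, ?_, ?_, ?_⟩ f
  · intro A B e hA f
    rw [← e.inv_hom_id_assoc f, hA (e.hom ≫ f), comp_zero]
  · intro Z hZ f
    exact hZ.eq_of_src f 0
  · intro A B hA hB f
    ext
    · simpa using hA (biprod.inl ≫ f)
    · simpa using hB (biprod.inr ≫ f)
  · rintro A Y ⟨ι, p, hιp⟩ hY f
    rw [← Category.id_comp f, ← hιp, Category.assoc, hY (p ≫ f), comp_zero]

lemma isMinRightApprox_mor₂_of_distTriang {T : Triangle C} (hT : T ∈ distTriang C)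
    {S : Set C} (hB : T.obj₂ ∈ S) (h₃ : ∀ A ∈ S, ∀ f : A ⟶ T.obj₃, f ≫ T.mor₃ = 0)
    (h₁ : ∀ k : T.obj₂ ⟶ T.obj₁, k = 0) : IsMinRightApprox C S T.mor₂ := by
  refine ⟨hB, fun A hA f => ?_, fun h hh => ?_⟩
  · obtain ⟨b, hb⟩ := Triangle.coyoneda_exact₃ T hT f (h₃ A hA f)
    exact ⟨b, hb.symm⟩
  · obtain ⟨k, hk⟩ := Triangle.coyoneda_exact₂ T hT (h - 𝟙 _)
      (by rw [Preadditive.sub_comp, hh, Category.id_comp, sub_self])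
    rw [h₁ k, zero_comp, sub_eq_zero] at hk
    rw [hk]
    infer_instance

lemma rotate_distTriang_of_iso_shift {A B D Y : C} {f : A ⟶ B} {g : B ⟶ D}
    {h : D ⟶ (shiftFunctor C (1 : ℤ)).obj A} (hT : Triangle.mk f g h ∈ distTriang C)
    (e : (shiftFunctor C (1 : ℤ)).obj A ≅ Y) :
    Triangle.mk g (h ≫ e.hom) (e.inv ≫ (-(shiftFunctor C (1 : ℤ)).map f)) ∈ distTriang C := by
  refine isomorphic_distinguished _ (rot_of_distTriang _ hT) _
    (Triangle.isoMk _ _ (Iso.refl _) (Iso.refl _) e.symm ?_ ?_ ?_)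
  · exact (Category.comp_id g).trans (Category.id_comp g).symm
  · exact ((Category.assoc _ _ _).trans (e.hom_inv_id ▸ Category.comp_id h)).trans
      (Category.id_comp h).symm
  · exact ((shiftFunctor C (1 : ℤ)).map_id B).symm ▸ Category.comp_id _

theorem statement15_general {r : ℕ} (X : Fin r → C) (hX : IsSMC C X) (i : Fin r)
    (j : Fin r) (hji : j ≠ i) (Xij Xj' : C)
    (g : (shiftFunctor C (-1 : ℤ)).obj (X j) ⟶ Xij)
    (hg : IsMinLeftApprox C (additiveClosure C {X i}) g)
    (c : Xij ⟶ Xj')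
    (w : Xj' ⟶ (shiftFunctor C (1 : ℤ)).obj ((shiftFunctor C (-1 : ℤ)).obj (X j)))
    (htri : Triangle.mk g c w ∈ distTriang C) :
    -- the map X_{ij} → X_j' is a minimal right add(X_i)-approximation …
    IsMinRightApprox C (additiveClosure C {X i}) c ∧
    -- … whose cone triangle recovers X_j, so the right mutation of the left-mutated
    -- collection recovers the original collection up to isomorphism
    ∃ (u : Xj' ⟶ X j) (v : X j ⟶ (shiftFunctor C (1 : ℤ)).obj Xij),
      Triangle.mk c u v ∈ distTriang C := by
  let e := (shiftFunctorCompIsoId C (-1 : ℤ) (1 : ℤ) (by norm_num)).app (X j)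
  have hXi_shift : ∀ B ∈ ({X i} : Set C),
      ∀ f : B ⟶ (shiftFunctor C (1 : ℤ)).obj ((shiftFunctor C (-1 : ℤ)).obj (X j)), f = 0 := by
    rintro _ rfl f
    exact (cancel_mono e.hom).1 (by rw [zero_comp]; exact hX.2.2.1 i j hji.symm _)
  have hXij_unshift : ∀ k : Xij ⟶ (shiftFunctor C (-1 : ℤ)).obj (X j), k = 0 :=
    hom_eq_zero_of_mem_additiveClosure
      (by rintro _ rfl; exact hX.1 i j (-1) (by norm_num)) hg.1
  exact ⟨isMinRightApprox_mor₂_of_distTriang htri hg.1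
      (fun A hA f => hom_eq_zero_of_mem_additiveClosure hXi_shift hA _) hXij_unshift,
    _, _, rotate_distTriang_of_iso_shift htri e⟩

theorem statement15 {r : ℕ} (X : Fin r → C) (hX : IsSMC C X) (i : Fin r)
    -- Hom(X_i, ΣX_i) = 0, so that the extension closure of X_i is add(X_i)
    (hrigid : ∀ f : X i ⟶ (shiftFunctor C (1 : ℤ)).obj (X i), f = 0)
    (j : Fin r) (hji : j ≠ i) (Xij Xj' : C)
    (g : (shiftFunctor C (-1 : ℤ)).obj (X j) ⟶ Xij)
    (hg : IsMinLeftApprox C (additiveClosure C {X i}) g)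
    (c : Xij ⟶ Xj')
    (w : Xj' ⟶ (shiftFunctor C (1 : ℤ)).obj ((shiftFunctor C (-1 : ℤ)).obj (X j)))
    (htri : Triangle.mk g c w ∈ distTriang C) :
    -- the map X_{ij} → X_j' is a minimal right add(X_i)-approximation …
    IsMinRightApprox C (additiveClosure C {X i}) c ∧
    -- … whose cone triangle recovers X_j, so the right mutation of the left-mutated
    -- collection recovers the original collection up to isomorphism
    ∃ (u : Xj' ⟶ X j) (v : X j ⟶ (shiftFunctor C (1 : ℤ)).obj Xij),
      Triangle.mk c u v ∈ distTriang C :=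
  statement15_general X hX i j hji Xij Xj' g hg c w htri
end
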